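/- Let X be a real Banach space in which Sm(X) is a dense G_δ subset, and let U be a dense subset of X. If a bounded linear operator T : X → X preserves Birkhoff-James orthogonality at each point of U, then T is a scalar multiple of an isometry. -/

import Mathlib

/-!
If `T` preserves Birkhoff–James orthogonality at `u ≠ 0` and `f` supports `u`, then `T` maps
`ker f` to vectors orthogonal to `T u`, and Hahn–Banach gives a supporting functional `g` of `T u`
with `‖u‖ • (g ∘ T) = ‖T u‖ • f`. So along every line `z + t • v`, the functions `‖z + t • v‖` and
`(‖z‖ / ‖T z‖) * ‖T (z + t • v)‖` have a common supporting slope at `t = 0`. The slopes lie in a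
compact interval, so this property passes to limits and holds at every `z`, not only on `U`.
On a segment avoiding `0`, comparing the two supporting lines at `s` and at `t` bounds
`|r s - r t|` for the ratio `r = ‖T ·‖ / ‖·‖` by a multiple of `(s - t) * (d s - d t)`, where the
slopes `d` are monotone; summing over finer and finer partitions shows that `r` is constant.
-/

open Metric Filter Set

/-- Birkhoff-James orthogonality. -/
def BJOrth {X : Type*} [NormedAddCommGroup X] [NormedSpace ℝ X] (u v : X) : Prop :=
  ∀ lam : ℝ, ‖u‖ ≤ ‖u + lam • v‖

/-- Set of norm-one supporting functionals at a point. -/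
def SuppFunc {X : Type*} [NormedAddCommGroup X] [NormedSpace ℝ X] (x : X) :
    Set (StrongDual ℝ X) := {f | ‖f‖ = 1 ∧ f x = ‖x‖}

/-- A nonzero point is smooth if it has a unique norm-one supporting functional. -/
def SmoothPt {X : Type*} [NormedAddCommGroup X] [NormedSpace ℝ X] (x : X) : Prop :=
  x ≠ 0 ∧ ∃! f : StrongDual ℝ X, f ∈ SuppFunc x

/-- `T` preserves Birkhoff-James orthogonality at `x`. -/
def PreservesBJAt {X Y : Type*} [NormedAddCommGroup X] [NormedSpace ℝ X]
    [NormedAddCommGroup Y] [NormedSpace ℝ Y] (T : X →L[ℝ] Y) (x : X) : Prop :=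
  ∀ v : X, BJOrth x v → BJOrth (T x) (T v)

/-- Splitting `[a, b]` into `n` equal pieces bounds `|r b - r a|` by `(b - a) * (d b - d a) / n`. -/
lemma eq_of_abs_sub_le_mul_sub {r d : ℝ → ℝ} {a b : ℝ} (hab : a ≤ b)
    (h : ∀ s ∈ Icc a b, ∀ t ∈ Icc a b, |r s - r t| ≤ (s - t) * (d s - d t)) : r a = r b := by
  have hbound (n : ℕ) (hn : 1 ≤ n) : |r b - r a| ≤ (b - a) * (d b - d a) / n := by
    have hn' : (0 : ℝ) < n := by exact_mod_cast hn
    set p : ℕ → ℝ := fun i => a + i * ((b - a) / n)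
    have hp0 : p 0 = a := by simp [p]
    have hpn : p n = b := by simp only [p]; field_simp; ring
    have hstep (i : ℕ) : p (i + 1) - p i = (b - a) / n := by simp only [p]; push_cast; ring
    have hp (i : ℕ) (hi : i ≤ n) : p i ∈ Icc a b := by
      have : (i : ℝ) * ((b - a) / n) ≤ b - a := by
        rw [mul_div_assoc', div_le_iff₀ hn', mul_comm (b - a)]
        exact mul_le_mul_of_nonneg_right (Nat.cast_le.2 hi) (sub_nonneg.2 hab)
      exact ⟨le_add_of_nonneg_right (by positivity), by linarith⟩
    calc |r b - r a| = |∑ i ∈ Finset.range n, (r (p (i + 1)) - r (p i))| := by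
          rw [Finset.sum_range_sub (fun i => r (p i)), hp0, hpn]
      _ ≤ ∑ i ∈ Finset.range n, |r (p (i + 1)) - r (p i)| := Finset.abs_sum_le_sum_abs _ _
      _ ≤ ∑ i ∈ Finset.range n, (b - a) / n * (d (p (i + 1)) - d (p i)) := by
          refine Finset.sum_le_sum fun i hi => hstep i ▸ h _ (hp _ ?_) _ (hp _ ?_) <;>
            linarith [Finset.mem_range.1 hi]
      _ = (b - a) * (d b - d a) / n := by
          rw [← Finset.mul_sum, Finset.sum_range_sub (fun i => d (p i)), hp0, hpn]; ring
  have : |r b - r a| ≤ 0 := ge_of_tendsto (tendsto_const_div_atTop_nhds_zero_nat _)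
    (eventually_atTop.2 ⟨1, hbound⟩)
  linarith [abs_nonpos_iff.1 this]

section

variable {X Y : Type*} [NormedAddCommGroup X] [NormedSpace ℝ X]
  [NormedAddCommGroup Y] [NormedSpace ℝ Y]

lemma apply_le_norm_of_mem_suppFunc {x : X} {f : StrongDual ℝ X} (hf : f ∈ SuppFunc x) (y : X) :
    f y ≤ ‖y‖ :=
  calc f y ≤ ‖f‖ * ‖y‖ := (le_abs_self _).trans (f.le_opNorm y)
    _ = ‖y‖ := by rw [hf.1, one_mul]

lemma mem_suppFunc_of_norm_le_one {x : X} (hx : x ≠ 0) {f : StrongDual ℝ X} (hf : ‖f‖ ≤ 1)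
    (hfx : f x = ‖x‖) : f ∈ SuppFunc x := by
  refine ⟨le_antisymm hf ?_, hfx⟩
  have : ‖x‖ ≤ ‖f‖ * ‖x‖ :=
    calc ‖x‖ = f x := hfx.symm
      _ ≤ ‖f‖ * ‖x‖ := (le_abs_self _).trans (f.le_opNorm x)
  exact one_le_of_le_mul_right₀ (norm_pos_iff.2 hx) (by simpa using this)

lemma BJOrth.of_mem_suppFunc {u v : X} {f : StrongDual ℝ X} (hf : f ∈ SuppFunc u)
    (hv : f v = 0) : BJOrth u v := fun lam =>
  calc ‖u‖ = f (u + lam • v) := by simp [hv, hf.2]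
    _ ≤ ‖u + lam • v‖ := apply_le_norm_of_mem_suppFunc hf _

/-- Hahn–Banach in the quotient `X ⧸ S`, whose norm at `u` is `dist u S = ‖u‖`. -/
lemma exists_mem_suppFunc_forall_eq_zero {u : X} (hu : u ≠ 0) {S : Submodule ℝ X}
    (hS : ∀ w ∈ S, BJOrth u w) : ∃ f ∈ SuppFunc u, ∀ w ∈ S, f w = 0 := by
  have hnorm : ‖S.mkQ u‖ = ‖u‖ := by
    refine le_antisymm (Submodule.Quotient.norm_mk_le S u) (le_of_forall_pos_lt_add fun ε hε => ?_)
    obtain ⟨m, hm, hlt⟩ := Submodule.Quotient.norm_mk_lt (S.mkQ u) hε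
    have hmu : m - u ∈ S := (Submodule.Quotient.eq S).1 hm
    calc ‖u‖ ≤ ‖u + (1 : ℝ) • (m - u)‖ := hS _ hmu 1
      _ = ‖m‖ := by simp
      _ < ‖S.mkQ u‖ + ε := hlt
  obtain ⟨g, hg, hgu⟩ := exists_dual_vector ℝ (S.mkQ u) (by rwa [hnorm, norm_ne_zero_iff])
  refine ⟨g.comp S.mkQL, mem_suppFunc_of_norm_le_one hu ?_ ?_, fun w hw => ?_⟩
  · refine ContinuousLinearMap.opNorm_le_bound _ zero_le_one fun x => ?_
    calc ‖g (S.mkQ x)‖ ≤ ‖g‖ * ‖S.mkQ x‖ := g.le_opNorm _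
      _ ≤ 1 * ‖x‖ := by rw [hg, one_mul, one_mul]; exact Submodule.Quotient.norm_mk_le S x
  · simpa [← hnorm] using hgu
  · simp [(Submodule.Quotient.mk_eq_zero S).2 hw]

lemma exists_mem_suppFunc_comp_eq {T : X →L[ℝ] Y} {u : X} (hT : PreservesBJAt T u)
    (hTu : T u ≠ 0) {f : StrongDual ℝ X} (hf : f ∈ SuppFunc u) :
    ∃ g ∈ SuppFunc (T u), ∀ y, ‖u‖ * g (T y) = ‖T u‖ * f y := by
  obtain ⟨g, hg, hgT⟩ := exists_mem_suppFunc_forall_eq_zero hTu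
    (S := (LinearMap.ker (f : X →ₗ[ℝ] ℝ)).map (T : X →ₗ[ℝ] Y))
    (by rintro _ ⟨w, hw, rfl⟩; exact hT w (.of_mem_suppFunc hf hw))
  refine ⟨g, hg, fun y => ?_⟩
  have hker : ‖u‖ • y - f y • u ∈ LinearMap.ker (f : X →ₗ[ℝ] ℝ) := by
    simp [hf.2, mul_comm]
  have := hgT _ ⟨_, hker, rfl⟩
  simp only [ContinuousLinearMap.coe_coe, map_sub, map_smul, smul_eq_mul, hg.2] at this
  linarith

/-- `d` is the slope at `0` of a common supporting line of `t ↦ ‖z + t • v‖` and of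
`t ↦ (‖z‖ / ‖T z‖) * ‖T (z + t • v)‖`; the second inequality is multiplied out so that it is
meaningful (and trivial) when `T z = 0`. -/
def IsCommonSupportSlope (T : X →L[ℝ] Y) (z v : X) (d : ℝ) : Prop :=
  ∀ h : ℝ, ‖z‖ + h * d ≤ ‖z + h • v‖ ∧ ‖T z‖ * (‖z‖ + h * d) ≤ ‖z‖ * ‖T (z + h • v)‖

lemma exists_isCommonSupportSlope_of_preservesBJAt {T : X →L[ℝ] Y} {z : X}
    (hT : PreservesBJAt T z) (v : X) :
    ∃ d ∈ Icc (-‖v‖) ‖v‖, IsCommonSupportSlope T z v d := by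
  rcases eq_or_ne z 0 with rfl | hz
  · exact ⟨0, by simp, fun h => by simp⟩
  obtain ⟨f, hf⟩ : ∃ f, f ∈ SuppFunc z := exists_dual_vector ℝ z (norm_ne_zero_iff.2 hz)
  have hfv (h : ℝ) : f (z + h • v) = ‖z‖ + h * f v := by simp [hf.2]
  refine ⟨f v, abs_le.1 ?_, fun h => ⟨?_, ?_⟩⟩
  · simpa [hf.1] using f.le_opNorm v
  · rw [← hfv]; exact apply_le_norm_of_mem_suppFunc hf _
  rcases eq_or_ne (T z) 0 with hTz | hTz
  · simp only [hTz, norm_zero, zero_mul]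
    positivity
  obtain ⟨g, hg, hgT⟩ := exists_mem_suppFunc_comp_eq hT hTz hf
  calc ‖T z‖ * (‖z‖ + h * f v) = ‖z‖ * g (T (z + h • v)) := by rw [hgT, hfv]
    _ ≤ ‖z‖ * ‖T (z + h • v)‖ :=
      mul_le_mul_of_nonneg_left (apply_le_norm_of_mem_suppFunc hg _) (norm_nonneg z)

lemma isClosed_setOf_isCommonSupportSlope (T : X →L[ℝ] Y) (v : X) :
    IsClosed {p : X × ℝ | IsCommonSupportSlope T p.1 v p.2} := by
  simp only [IsCommonSupportSlope, ofPred_forall, ofPred_and]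
  exact isClosed_iInter fun h =>
    (isClosed_le (by fun_prop) (by fun_prop)).inter (isClosed_le (by fun_prop) (by fun_prop))

lemma exists_isCommonSupportSlope {T : X →L[ℝ] Y} {U : Set X} (hU : Dense U)
    (hpres : ∀ x ∈ U, PreservesBJAt T x) (z v : X) : ∃ d, IsCommonSupportSlope T z v d := by
  set A : Set (X × Icc (-‖v‖) ‖v‖) := {p | IsCommonSupportSlope T p.1 v p.2}
  have hA : IsClosed (Prod.fst '' A) :=
    isClosedMap_fst_of_compactSpace _ <|
      (isClosed_setOf_isCommonSupportSlope T v).preimage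
        (f := fun p : X × Icc (-‖v‖) ‖v‖ => (p.1, (p.2 : ℝ))) (by fun_prop)
  have hUA : U ⊆ Prod.fst '' A := fun x hx => by
    obtain ⟨d, hd, hslope⟩ := exists_isCommonSupportSlope_of_preservesBJAt (hpres x hx) v
    exact ⟨(x, ⟨d, hd⟩), hslope, rfl⟩
  obtain ⟨p, hp, rfl⟩ : z ∈ Prod.fst '' A :=
    hA.closure_subset_iff.2 hUA (hU.closure_eq ▸ mem_univ z)
  exact ⟨p.2, hp⟩

lemma IsCommonSupportSlope.div_sub_div_le {T : X →L[ℝ] Y} {z v w : X} {h d e δ : ℝ}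
    (hd : IsCommonSupportSlope T z v d) (he : IsCommonSupportSlope T w v e) (hw : z + h • v = w)
    (hz : z ≠ 0) (hδ : 0 < δ) (hδw : δ ≤ ‖w‖) :
    ‖T z‖ / ‖z‖ - ‖T w‖ / ‖w‖ ≤ ‖T‖ / δ * (h * (e - d)) := by
  subst hw
  have hzpos : 0 < ‖z‖ := norm_pos_iff.2 hz
  have hwpos : 0 < ‖z + h • v‖ := hδ.trans_le hδw
  set ρ := ‖T z‖ / ‖z‖
  have hρ : 0 ≤ ρ ∧ ρ ≤ ‖T‖ :=
    ⟨by positivity, div_le_of_le_mul₀ hzpos.le (norm_nonneg _) (T.le_opNorm z)⟩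
  have hzw : ‖z‖ + h * d ≤ ‖z + h • v‖ := (hd h).1
  have hwz : ‖z + h • v‖ ≤ ‖z‖ + h * e := by
    have := (he (-h)).1
    rw [neg_smul, add_neg_cancel_right] at this
    linarith
  have hTw : ρ * (‖z‖ + h * d) ≤ ‖T (z + h • v)‖ := by
    rw [div_mul_eq_mul_div, div_le_iff₀ hzpos]
    linarith [(hd h).2]
  have hslopes : 0 ≤ h * (e - d) := by linarith
  have hkey : ρ * ‖z + h • v‖ - ‖T (z + h • v)‖ ≤ ‖T‖ * (h * (e - d)) :=
    calc ρ * ‖z + h • v‖ - ‖T (z + h • v)‖ ≤ ρ * (h * (e - d)) := by nlinarith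
      _ ≤ ‖T‖ * (h * (e - d)) := mul_le_mul_of_nonneg_right hρ.2 hslopes
  calc ρ - ‖T (z + h • v)‖ / ‖z + h • v‖
        = (ρ * ‖z + h • v‖ - ‖T (z + h • v)‖) / ‖z + h • v‖ := by field_simp
    _ ≤ ‖T‖ * (h * (e - d)) / ‖z + h • v‖ := div_le_div_of_nonneg_right hkey hwpos.le
    _ ≤ ‖T‖ * (h * (e - d)) / δ := div_le_div_of_nonneg_left (by positivity) hδ hδw
    _ = ‖T‖ / δ * (h * (e - d)) := by ring

lemma norm_apply_mul_norm_eq_of_linearIndependent {T : X →L[ℝ] Y}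
    (hslope : ∀ z v : X, ∃ d, IsCommonSupportSlope T z v d) {x y : X}
    (hxy : LinearIndependent ℝ ![x, y]) : ‖T x‖ * ‖y‖ = ‖T y‖ * ‖x‖ := by
  set z : ℝ → X := fun t => x + t • (y - x)
  have hz_add (s t : ℝ) : z t + (s - t) • (y - x) = z s := by
    simp only [z, add_assoc, ← add_smul, add_sub_cancel]
  have hz_ne (t : ℝ) : z t ≠ 0 := fun ht => by
    have := LinearIndependent.pair_iff.1 hxy (1 - t) t (by rw [← ht]; module)
    linarith [this.1, this.2]
  obtain ⟨t₀, -, ht₀⟩ := isCompact_Icc.exists_isMinOn (nonempty_Icc.2 zero_le_one)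
    (f := fun t => ‖z t‖) (by fun_prop)
  choose d hd using fun t => hslope (z t) (y - x)
  have hδ : 0 < ‖z t₀‖ := norm_pos_iff.2 (hz_ne t₀)
  have hratio := eq_of_abs_sub_le_mul_sub zero_le_one (r := fun t => ‖T (z t)‖ / ‖z t‖)
    (d := fun t => ‖T‖ / ‖z t₀‖ * d t) fun s hs t ht => by
      rw [abs_sub_le_iff]
      constructor
      · have := (hd s).div_sub_div_le (hd t) (hz_add t s) (hz_ne s) hδ (ht₀ ht)
        linarith
      · have := (hd t).div_sub_div_le (hd s) (hz_add s t) (hz_ne t) hδ (ht₀ hs)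
        linarith
  have hx : z 0 = x := by simp [z]
  have hy : z 1 = y := by simp [z]
  simp only [hx, hy] at hratio
  rwa [div_eq_div_iff (norm_ne_zero_iff.2 (hx ▸ hz_ne 0)) (norm_ne_zero_iff.2 (hy ▸ hz_ne 1))]
    at hratio

lemma norm_apply_mul_norm_eq {T : X →L[ℝ] Y}
    (hslope : ∀ z v : X, ∃ d, IsCommonSupportSlope T z v d) (x y : X) :
    ‖T x‖ * ‖y‖ = ‖T y‖ * ‖x‖ := by
  rcases eq_or_ne x 0 with rfl | hx
  · simp
  by_cases hxy : LinearIndependent ℝ ![x, y]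
  · exact norm_apply_mul_norm_eq_of_linearIndependent hslope hxy
  obtain ⟨a, rfl⟩ : ∃ a : ℝ, a • x = y := by
    simpa [LinearIndependent.pair_iff' hx] using hxy
  simp only [map_smul, norm_smul]
  ring

end

theorem stmt_10_general {X : Type*} [NormedAddCommGroup X] [NormedSpace ℝ X]
    (T : X →L[ℝ] X)
    (U : Set X) (hU : Dense U)
    (hpres : ∀ x ∈ U, PreservesBJAt T x) :
    ∃ lam : ℝ, 0 ≤ lam ∧ ∀ x : X, ‖T x‖ = lam * ‖x‖ := by
  have hratio := norm_apply_mul_norm_eq (exists_isCommonSupportSlope hU hpres)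
  by_cases hX : ∀ x : X, x = 0
  · exact ⟨0, le_rfl, fun x => by simp [hX x]⟩
  obtain ⟨x₀, hx₀⟩ := not_forall.1 hX
  refine ⟨‖T x₀‖ / ‖x₀‖, by positivity, fun x => ?_⟩
  rw [div_mul_eq_mul_div, eq_div_iff (norm_ne_zero_iff.2 hx₀), hratio]

theorem stmt_10 {X : Type*} [NormedAddCommGroup X] [NormedSpace ℝ X] [CompleteSpace X]
    (T : X →L[ℝ] X)
    (hd : Dense {x : X | SmoothPt x}) (hg : IsGδ {x : X | SmoothPt x})
    (U : Set X) (hU : Dense U)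
    (hpres : ∀ x ∈ U, PreservesBJAt T x) :
    ∃ lam : ℝ, 0 ≤ lam ∧ ∀ x : X, ‖T x‖ = lam * ‖x‖ :=
  stmt_10_general T U hU hpres
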